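/- arXiv:2602.08737 — 3 statements merged into one kernel-verified Lean document; each statement's English description precedes it below -/
import Mathlib

section
/- Let n ≥ 3, fix an index μ ∈ {0,…,n−1} and a constant vector d ∈ ℝ³, and fix the vertices r_ν ∈ ℝ³ for ν ≠ μ. Regard f(x) = S(r_0,…,r_{μ−1}, x, r_{μ+1},…,r_{n−1}) · d as a function of x ∈ ℝ³, where S is the polygon area vector. Then f is differentiable and its gradient at x = r_μ equals (1/2)(r_{μ+1} − r_{μ−1}) × d. -/
open Matrix BigOperators

/-- The area vector of a closed polygonal loop with vertices `r 0, …, r (n-1)`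
(indices cyclic): `S(r) = (1/2) ∑ μ, r μ ×₃ r (μ+1)`. -/
noncomputable def polyAreaVec {n : ℕ} [NeZero n] (r : Fin n → Fin 3 → ℝ) : Fin 3 → ℝ :=
  (1 / 2 : ℝ) • ∑ μ : Fin n, (r μ) ⨯₃ (r (μ + 1))

/-- The gradient of a scalar function of a single point of `ℝ³`: the vector of partial
derivatives with respect to the three coordinates. -/
noncomputable def grad3 (f : (Fin 3 → ℝ) → ℝ) (x : Fin 3 → ℝ) : Fin 3 → ℝ :=
  fun i => fderiv ℝ f x (Pi.single i 1)

private lemma sumDot (n : ℕ) (f : Fin n → Fin 3 → ℝ) (d : Fin 3 → ℝ) :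
    (∑ i, f i) ⬝ᵥ d = ∑ i, f i ⬝ᵥ d := by
  simp [dotProduct, Finset.sum_mul]
  exact Finset.sum_comm

private noncomputable def dotCLM (w : Fin 3 → ℝ) : (Fin 3 → ℝ) →L[ℝ] ℝ :=
  LinearMap.toContinuousLinearMap
    { toFun := fun x => x ⬝ᵥ w
      map_add' := fun a b => add_dotProduct a b w
      map_smul' := fun c a => smul_dotProduct c a w }

/-- Fixing all vertices except `r μ` and a constant vector `d`, the map
`f : x ↦ S(r with μ-th vertex replaced by x) · d` is differentiable, and its gradient at
`x = r μ` equals `(1/2) (r (μ+1) - r (μ-1)) ×₃ d`. -/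
theorem stmt1 (n : ℕ) [NeZero n] (hn : 3 ≤ n) (μ : Fin n) (d : Fin 3 → ℝ)
    (r : Fin n → Fin 3 → ℝ) :
    Differentiable ℝ (fun x : Fin 3 → ℝ => polyAreaVec (Function.update r μ x) ⬝ᵥ d) ∧
    grad3 (fun x : Fin 3 → ℝ => polyAreaVec (Function.update r μ x) ⬝ᵥ d) (r μ)
      = (1 / 2 : ℝ) • ((r (μ + 1) - r (μ - 1)) ⨯₃ d) := by
  have h1 : (1 : Fin n) ≠ 0 := by
    have : (1 : Fin n).val = 1 := by
      rw [Fin.val_one']; exact Nat.mod_eq_of_lt (by omega)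
    intro h; rw [Fin.ext_iff, this] at h; simp at h
  have hsucc : μ + 1 ≠ μ := by
    intro h
    exact h1 (by have := add_left_cancel (a := μ) (b := (1:Fin n)) (c := 0) (by simpa using h); simpa using this)
  have hpred : μ - 1 ≠ μ := by
    intro h
    apply hsucc
    calc μ + 1 = (μ - 1) + 1 := by rw [h]
    _ = μ := sub_add_cancel μ 1
  set w : Fin 3 → ℝ := (r (μ + 1) - r (μ - 1)) ⨯₃ d with hw
  set C : ℝ := (1/2 : ℝ) * ∑ ν ∈ Finset.univ \ ({μ, μ - 1} : Finset (Fin n)),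
      ((r ν) ⨯₃ (r (ν + 1))) ⬝ᵥ d with hC
  have key : ∀ x : Fin 3 → ℝ,
      polyAreaVec (Function.update r μ x) ⬝ᵥ d = C + (1/2 : ℝ) * (x ⬝ᵥ w) := by
    intro x
    set u := Function.update r μ x with hu
    have step1 : polyAreaVec u ⬝ᵥ d
        = (1/2 : ℝ) * ∑ ν : Fin n, ((u ν) ⨯₃ (u (ν + 1))) ⬝ᵥ d := by
      rw [polyAreaVec, smul_dotProduct, sumDot]
      simp
    rw [step1]
    have hsplit : ∑ ν : Fin n, ((u ν) ⨯₃ (u (ν + 1))) ⬝ᵥ d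
        = (∑ ν ∈ Finset.univ \ ({μ, μ - 1} : Finset (Fin n)), ((u ν) ⨯₃ (u (ν + 1))) ⬝ᵥ d)
          + (((u μ) ⨯₃ (u (μ + 1))) ⬝ᵥ d + ((u (μ - 1)) ⨯₃ (u (μ - 1 + 1))) ⬝ᵥ d) := by
      rw [← Finset.sum_sdiff (Finset.subset_univ ({μ, μ - 1} : Finset (Fin n))),
        Finset.sum_pair (Ne.symm hpred)]
    rw [hsplit]
    have hcomp : ∀ ν ∈ Finset.univ \ ({μ, μ - 1} : Finset (Fin n)),
        ((u ν) ⨯₃ (u (ν + 1))) ⬝ᵥ d = ((r ν) ⨯₃ (r (ν + 1))) ⬝ᵥ d := by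
      intro ν hν
      simp only [Finset.mem_sdiff, Finset.mem_insert, Finset.mem_singleton] at hν
      have hν1 : ν ≠ μ := fun h => hν.2 (Or.inl h)
      have hν2 : ν + 1 ≠ μ := by
        intro h
        exact hν.2 (Or.inr (by rw [← h]; simp))
      rw [hu, Function.update_of_ne hν1, Function.update_of_ne hν2]
    rw [Finset.sum_congr rfl hcomp]
    have hu1 : u μ = x := Function.update_self μ x r
    have hu2 : u (μ + 1) = r (μ + 1) := Function.update_of_ne hsucc x r
    have hu3 : u (μ - 1) = r (μ - 1) := Function.update_of_ne hpred x r
    have hu4 : u (μ - 1 + 1) = x := by rw [sub_add_cancel, hu1]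
    rw [hu1, hu2, hu3, hu4]
    have tri : (x ⨯₃ r (μ + 1)) ⬝ᵥ d + (r (μ - 1) ⨯₃ x) ⬝ᵥ d = x ⬝ᵥ w := by
      rw [hw]
      simp [crossProduct, dotProduct, Fin.sum_univ_three]
      ring
    rw [tri]
    ring
  have hfd : ∀ x : Fin 3 → ℝ,
      HasFDerivAt (fun x : Fin 3 → ℝ => polyAreaVec (Function.update r μ x) ⬝ᵥ d)
        ((1/2 : ℝ) • dotCLM w) x := by
    intro x
    have : HasFDerivAt (fun x : Fin 3 → ℝ => C + (1/2 : ℝ) * (x ⬝ᵥ w))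
        ((1/2 : ℝ) • dotCLM w) x := by
      have hdot : HasFDerivAt (fun x : Fin 3 → ℝ => x ⬝ᵥ w) (dotCLM w) x :=
        (dotCLM w).hasFDerivAt
      exact (hdot.const_mul (1/2 : ℝ)).const_add C
    exact this.congr_of_eventuallyEq (Filter.Eventually.of_forall fun y => (key y))
  constructor
  · exact fun x => (hfd x).differentiableAt
  · funext i
    rw [grad3, (hfd (r μ)).fderiv]
    simp [dotCLM, dotProduct, Pi.single_apply, Finset.sum_ite_eq']
end

section
/- Let n ≥ 3, let r_0,…,r_{n−1} ∈ ℝ³ be vertices with cyclic indexing, let S = (1/2) Σ_μ r_μ × r_{μ+1} be the area vector, and let d ∈ ℝ³ be a constant vector. Then Σ_{μ=0}^{n−1} r_μ ⊗ ∇_{r_μ}(S · d) = (S · d) · I − d ⊗ S, where I is the 3×3 identity matrix. -/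
open Matrix BigOperators

/-- The gradient of a scalar function of a family of points with respect to the vertex `a`. -/
noncomputable def vgrad {ι : Type*} [DecidableEq ι] (f : (ι → Fin 3 → ℝ) → ℝ)
    (r : ι → Fin 3 → ℝ) (a : ι) : Fin 3 → ℝ :=
  grad3 (fun x => f (Function.update r a x)) (r a)

private lemma sum_dot' {ι : Type*} (s : Finset ι) (f : ι → Fin 3 → ℝ) (d : Fin 3 → ℝ) :
    (∑ i ∈ s, f i) ⬝ᵥ d = ∑ i ∈ s, f i ⬝ᵥ d := by
  simp only [dotProduct, Finset.sum_apply, Finset.sum_mul]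
  exact Finset.sum_comm

private lemma dot_sum' {ι : Type*} (s : Finset ι) (x : Fin 3 → ℝ) (f : ι → Fin 3 → ℝ) :
    x ⬝ᵥ (∑ i ∈ s, f i) = ∑ i ∈ s, x ⬝ᵥ f i := by
  simp only [dotProduct, Finset.sum_apply, Finset.mul_sum]
  exact Finset.sum_comm

private lemma triple1 (x b d : Fin 3 → ℝ) : (x ⨯₃ b) ⬝ᵥ d = x ⬝ᵥ (b ⨯₃ d) := by
  simp [crossProduct, dotProduct, Fin.sum_univ_three]; ring

private lemma triple2 (a x d : Fin 3 → ℝ) : (a ⨯₃ x) ⬝ᵥ d = x ⬝ᵥ (d ⨯₃ a) := by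
  simp [crossProduct, dotProduct, Fin.sum_univ_three]; ring

private lemma key3 (a b d : Fin 3 → ℝ) (i j : Fin 3) :
    a i * (b ⨯₃ d) j + b i * (d ⨯₃ a) j
      = ((a ⨯₃ b) ⬝ᵥ d) * (if i = j then 1 else 0) - d i * ((a ⨯₃ b) j) := by
  fin_cases i <;> fin_cases j <;>
    simp [crossProduct, dotProduct, Fin.sum_univ_three] <;> ring

private lemma hasFDeriv_affine (w : Fin 3 → ℝ) (C : ℝ) (x : Fin 3 → ℝ) :
    HasFDerivAt (fun y : Fin 3 → ℝ => y ⬝ᵥ w + C)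
      (∑ i : Fin 3, w i • ContinuousLinearMap.proj (R := ℝ) (φ := fun _ : Fin 3 => ℝ) i) x := by
  have h : (fun y : Fin 3 → ℝ => y ⬝ᵥ w + C)
      = fun y => (∑ i : Fin 3, w i • ContinuousLinearMap.proj (R := ℝ)
          (φ := fun _ : Fin 3 => ℝ) i) y + C := by
    funext y
    simp [dotProduct, ContinuousLinearMap.sum_apply, mul_comm]
  rw [h]
  exact ((∑ i : Fin 3, w i • ContinuousLinearMap.proj (R := ℝ)
      (φ := fun _ : Fin 3 => ℝ) i).hasFDerivAt (x := x)).add_const C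

private lemma grad3_affine (w : Fin 3 → ℝ) (C : ℝ) (x : Fin 3 → ℝ) :
    grad3 (fun y => y ⬝ᵥ w + C) x = w := by
  funext i
  unfold grad3
  rw [(hasFDeriv_affine w C x).fderiv]
  simp [ContinuousLinearMap.sum_apply, Pi.single_apply]

private lemma vgrad_eq (n : ℕ) [NeZero n] (hn : 3 ≤ n) (r : Fin n → Fin 3 → ℝ)
    (d : Fin 3 → ℝ) (μ : Fin n) :
    vgrad (fun s => polyAreaVec s ⬝ᵥ d) r μ
      = (1 / 2 : ℝ) • (r (μ + 1) ⨯₃ d + d ⨯₃ r (μ - 1)) := by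
  have h10 : (1 : Fin n) ≠ 0 := by
    rw [Ne, Fin.one_eq_zero_iff]; omega
  have hne1 : μ + 1 ≠ μ := by
    intro h
    apply h10
    have h' : μ + 1 = μ + 0 := by rw [add_zero]; exact h
    exact add_left_cancel h'
  have hne2 : μ - 1 ≠ μ := by
    intro h
    apply hne1
    have h' := congrArg (· + 1) h
    simp only [sub_add_cancel] at h'
    exact h'.symm
  have hsub : μ - 1 + 1 = μ := sub_add_cancel μ 1
  set w : Fin 3 → ℝ := (1 / 2 : ℝ) • (r (μ + 1) ⨯₃ d + d ⨯₃ r (μ - 1)) with hw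
  set C : ℝ := (1 / 2 : ℝ) *
      ∑ ν : Fin n, (if ν = μ ∨ ν = μ - 1 then 0 else (r ν ⨯₃ r (ν + 1)) ⬝ᵥ d) with hC
  have hf : (fun x => polyAreaVec (Function.update r μ x) ⬝ᵥ d)
      = fun x => x ⬝ᵥ w + C := by
    funext x
    have hterm : ∀ ν : Fin n,
        ((Function.update r μ x ν) ⨯₃ (Function.update r μ x (ν + 1))) ⬝ᵥ d
          = x ⬝ᵥ ((if ν = μ then r (μ + 1) ⨯₃ d else 0)
              + (if ν = μ - 1 then d ⨯₃ r (μ - 1) else 0))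
            + (if ν = μ ∨ ν = μ - 1 then 0 else (r ν ⨯₃ r (ν + 1)) ⬝ᵥ d) := by
      intro ν
      by_cases h1 : ν = μ
      · subst h1
        have hνm : ν ≠ ν - 1 := fun h => hne2 h.symm
        rw [Function.update_self, Function.update_of_ne hne1,
          if_pos rfl, if_neg hνm, if_pos (Or.inl rfl)]
        simp only [add_zero]
        exact triple1 x (r (ν + 1)) d
      · by_cases h2 : ν = μ - 1
        · subst h2
          rw [Function.update_of_ne hne2, hsub, Function.update_self,
            if_neg h1, if_pos rfl, if_pos (Or.inr rfl)]
          simp only [zero_add, add_zero]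
          exact triple2 (r (μ - 1)) x d
        · have h3 : ν + 1 ≠ μ := by
            intro h; exact h2 (by rw [← h]; simp)
          rw [Function.update_of_ne h1, Function.update_of_ne h3,
            if_neg h1, if_neg h2, if_neg (by tauto)]
          simp
    have hsumw : ∑ ν : Fin n, ((if ν = μ then r (μ + 1) ⨯₃ d else 0)
        + (if ν = μ - 1 then d ⨯₃ r (μ - 1) else 0))
        = r (μ + 1) ⨯₃ d + d ⨯₃ r (μ - 1) := by
      rw [Finset.sum_add_distrib, Finset.sum_ite_eq' Finset.univ μ,
        Finset.sum_ite_eq' Finset.univ (μ - 1)]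
      simp
    calc polyAreaVec (Function.update r μ x) ⬝ᵥ d
        = (1 / 2 : ℝ) * ∑ ν : Fin n,
            ((Function.update r μ x ν) ⨯₃ (Function.update r μ x (ν + 1))) ⬝ᵥ d := by
          rw [polyAreaVec, smul_dotProduct, sum_dot']; simp
      _ = (1 / 2 : ℝ) * ((x ⬝ᵥ (r (μ + 1) ⨯₃ d + d ⨯₃ r (μ - 1)))
            + ∑ ν : Fin n, (if ν = μ ∨ ν = μ - 1 then 0 else (r ν ⨯₃ r (ν + 1)) ⬝ᵥ d)) := by
          rw [Finset.sum_congr rfl (fun ν _ => hterm ν), Finset.sum_add_distrib,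
            ← dot_sum', hsumw]
      _ = x ⬝ᵥ w + C := by
          rw [hw, hC, dotProduct_smul]
          simp [smul_eq_mul]
          ring
  unfold vgrad
  rw [hf]
  exact grad3_affine w C (r μ)

/-- For the polygon area vector `S` and a constant vector `d`,
`∑ μ, r μ ⊗ ∇_{r μ}(S · d) = (S · d) I - d ⊗ S`. -/
theorem stmt3 (n : ℕ) [NeZero n] (hn : 3 ≤ n) (r : Fin n → Fin 3 → ℝ) (d : Fin 3 → ℝ) :
    ∑ μ : Fin n, vecMulVec (r μ) (vgrad (fun s => polyAreaVec s ⬝ᵥ d) r μ)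
      = (polyAreaVec r ⬝ᵥ d) • (1 : Matrix (Fin 3) (Fin 3) ℝ)
        - vecMulVec d (polyAreaVec r) := by
  ext i j
  have hL : (∑ μ : Fin n, vecMulVec (r μ) (vgrad (fun s => polyAreaVec s ⬝ᵥ d) r μ)) i j
      = (1 / 2 : ℝ) * ∑ μ : Fin n,
          (r μ i * (r (μ + 1) ⨯₃ d) j + r μ i * (d ⨯₃ r (μ - 1)) j) := by
    rw [Matrix.sum_apply, Finset.mul_sum]
    refine Finset.sum_congr rfl fun μ _ => ?_
    rw [vecMulVec_apply, vgrad_eq n hn r d μ]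
    simp [Pi.smul_apply, smul_eq_mul]
    ring
  have hre : ∑ μ : Fin n, r μ i * (d ⨯₃ r (μ - 1)) j
      = ∑ μ : Fin n, r (μ + 1) i * (d ⨯₃ r μ) j := by
    refine Fintype.sum_equiv (Equiv.subRight (1 : Fin n)) _ _ fun μ => ?_
    simp [Equiv.subRight, sub_add_cancel]
  have hS : ∀ k, polyAreaVec r k = (1 / 2 : ℝ) * ∑ μ : Fin n, (r μ ⨯₃ r (μ + 1)) k := by
    intro k
    rw [polyAreaVec]
    simp [Finset.sum_apply, Finset.mul_sum]
  have hSd : polyAreaVec r ⬝ᵥ d = (1 / 2 : ℝ) * ∑ μ : Fin n, (r μ ⨯₃ r (μ + 1)) ⬝ᵥ d := by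
    rw [polyAreaVec, smul_dotProduct, sum_dot']; simp
  rw [hL, Finset.sum_add_distrib, hre, ← Finset.sum_add_distrib]
  rw [Finset.sum_congr rfl (fun μ _ => key3 (r μ) (r (μ + 1)) d i j)]
  rw [Matrix.sub_apply, Matrix.smul_apply, Matrix.one_apply, vecMulVec_apply, hSd, hS j]
  rw [Finset.sum_sub_distrib, ← Finset.sum_mul, ← Finset.mul_sum]
  simp only [smul_eq_mul, mul_ite, mul_one, mul_zero]
  split_ifs <;> ring
end

section
/- Let n ≥ 3, let r_0,…,r_{n−1} ∈ ℝ³ be vertices with cyclic indexing, and suppose the area vector S = (1/2) Σ_μ r_μ × r_{μ+1} is nonzero. Then Σ_{μ=0}^{n−1} r_μ ⊗ ∇_{r_μ}‖S‖ = ‖S‖ · I − (1/‖S‖) · S ⊗ S. -/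
open Matrix BigOperators

/-- Euclidean norm on `ℝ³` realized as `Fin 3 → ℝ`. -/
noncomputable def norm3 (v : Fin 3 → ℝ) : ℝ := Real.sqrt (v ⬝ᵥ v)

/- ### Auxiliary lemmas -/

lemma cross_outer (a b S : Fin 3 → ℝ) :
    vecMulVec a (b ⨯₃ S) - vecMulVec b (a ⨯₃ S)
      = ((a ⨯₃ b) ⬝ᵥ S) • (1 : Matrix (Fin 3) (Fin 3) ℝ) - vecMulVec S (a ⨯₃ b) := by
  ext i j
  fin_cases i <;> fin_cases j <;>
    simp [vecMulVec, cross_apply, dotProduct, Fin.sum_univ_three, Matrix.one_apply] <;> ring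

lemma dot_single_cross (S d : Fin 3 → ℝ) (j : Fin 3) :
    S ⬝ᵥ ((Pi.single j 1 : Fin 3 → ℝ) ⨯₃ d) = (d ⨯₃ S) j := by
  fin_cases j <;>
    simp [cross_apply, dotProduct, Fin.sum_univ_three, Pi.single_apply] <;> ring

lemma cross_sub_left (a b c : Fin 3 → ℝ) : (a - b) ⨯₃ c = a ⨯₃ c - b ⨯₃ c := by
  funext i; fin_cases i <;> (simp [cross_apply]; try ring)

lemma vecMulVec_smul_right (u : Fin 3 → ℝ) (c : ℝ) (w : Fin 3 → ℝ) :
    vecMulVec u (c • w) = c • vecMulVec u w := by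
  ext i j; simp [vecMulVec, Matrix.smul_apply]; ring

lemma vecMulVec_sub_right (u v w : Fin 3 → ℝ) :
    vecMulVec u (v - w) = vecMulVec u v - vecMulVec u w := by
  ext i j; simp [vecMulVec, mul_sub]

lemma vecMulVec_sum_right {n : ℕ} (u : Fin 3 → ℝ) (w : Fin n → Fin 3 → ℝ) :
    vecMulVec u (∑ μ : Fin n, w μ) = ∑ μ : Fin n, vecMulVec u (w μ) := by
  ext i j; simp [vecMulVec, Finset.mul_sum, Matrix.sum_apply]

lemma sum_dotProduct' {n : ℕ} (w : Fin n → Fin 3 → ℝ) (S : Fin 3 → ℝ) :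
    (∑ μ : Fin n, w μ) ⬝ᵥ S = ∑ μ : Fin n, (w μ ⬝ᵥ S) := by
  simp only [dotProduct, Finset.sum_apply, Finset.sum_mul]
  exact Finset.sum_comm

lemma norm3_ne_zero {v : Fin 3 → ℝ} (h : v ≠ 0) : norm3 v ≠ 0 := by
  rw [norm3, Real.sqrt_ne_zero']
  rcases lt_or_eq_of_le (Finset.sum_nonneg fun i _ => mul_self_nonneg (v i) :
      (0:ℝ) ≤ v ⬝ᵥ v) with h1 | h1
  · exact h1
  · exact absurd (dotProduct_self_eq_zero.mp h1.symm) h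

lemma sq_norm3 (v : Fin 3 → ℝ) : norm3 v * norm3 v = v ⬝ᵥ v :=
  Real.mul_self_sqrt (Finset.sum_nonneg fun i _ => mul_self_nonneg (v i))

lemma fderiv_norm3_comp {g : (Fin 3 → ℝ) → (Fin 3 → ℝ)} {L : (Fin 3 → ℝ) →L[ℝ] (Fin 3 → ℝ)}
    {p : Fin 3 → ℝ} (hg : HasFDerivAt g L p) (h : g p ≠ 0) (v : Fin 3 → ℝ) :
    fderiv ℝ (fun x => norm3 (g x)) p v = (g p ⬝ᵥ L v) / norm3 (g p) := by
  have hq0 : g p ⬝ᵥ g p ≠ 0 := fun hc => h (dotProduct_self_eq_zero.mp hc)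
  have hi : ∀ i : Fin 3, HasFDerivAt (fun x => g x i)
      ((ContinuousLinearMap.proj i).comp L) p :=
    fun i => (ContinuousLinearMap.proj (R := ℝ) (φ := fun _ : Fin 3 => ℝ) i).hasFDerivAt.comp p hg
  have hq : HasFDerivAt (fun x => g x ⬝ᵥ g x)
      (∑ i : Fin 3, (g p i • ((ContinuousLinearMap.proj i).comp L)
        + g p i • ((ContinuousLinearMap.proj i).comp L))) p := by
    have := HasFDerivAt.fun_sum (fun i (_ : i ∈ Finset.univ) => (hi i).mul (hi i))
    simpa [dotProduct] using this
  have hfd : fderiv ℝ (fun x => norm3 (g x)) p = _ := (hq.sqrt hq0).fderiv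
  rw [hfd]
  simp only [ContinuousLinearMap.smul_apply, ContinuousLinearMap.sum_apply,
    ContinuousLinearMap.add_apply, ContinuousLinearMap.coe_smul', Pi.smul_apply,
    ContinuousLinearMap.coe_comp', Function.comp_apply, ContinuousLinearMap.proj_apply,
    smul_eq_mul]
  have hsum : ∑ i : Fin 3, (g p i * L v i + g p i * L v i) = 2 * (g p ⬝ᵥ L v) := by
    rw [dotProduct, Finset.sum_add_distrib, two_mul]
  rw [hsum, norm3]
  have hs' : Real.sqrt (g p ⬝ᵥ g p) ≠ 0 := norm3_ne_zero h
  field_simp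

lemma polyAreaVec_update {n : ℕ} [NeZero n] (hn : 3 ≤ n) (r : Fin n → Fin 3 → ℝ)
    (μ : Fin n) (x : Fin 3 → ℝ) :
    polyAreaVec (Function.update r μ x)
      = polyAreaVec r + (1 / 2 : ℝ) • ((x - r μ) ⨯₃ (r (μ + 1) - r (μ - 1))) := by
  have h1 : (1 : Fin n) ≠ 0 := by
    intro h
    have := congrArg Fin.val h
    rw [Fin.val_one', Nat.mod_eq_of_lt (by omega)] at this
    simp at this
  have hμ1 : μ + 1 ≠ μ := fun h => h1 (by rwa [add_eq_left] at h)
  have hμm : μ - 1 ≠ μ := fun h => h1 (by rwa [sub_eq_self] at h)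
  set F : Fin n → Fin 3 → ℝ :=
    fun ν => (Function.update r μ x ν) ⨯₃ (Function.update r μ x (ν + 1)) with hF
  set G : Fin n → Fin 3 → ℝ := fun ν => (r ν) ⨯₃ (r (ν + 1)) with hG
  have hsplit : ∑ ν : Fin n, F ν = ∑ ν : Fin n, G ν + ∑ ν : Fin n, (F ν - G ν) := by
    rw [← Finset.sum_add_distrib]; simp
  have hvanish : ∑ ν : Fin n, (F ν - G ν) = ∑ ν ∈ ({μ - 1, μ} : Finset (Fin n)), (F ν - G ν) := by
    refine (Finset.sum_subset (Finset.subset_univ _) ?_).symm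
    intro ν _ hν
    simp only [Finset.mem_insert, Finset.mem_singleton, not_or] at hν
    have hν1 : ν ≠ μ := hν.2
    have hν2 : ν + 1 ≠ μ := by
      intro h; exact hν.1 (by rw [← h]; simp)
    rw [hF, hG]
    simp [Function.update_of_ne hν1, Function.update_of_ne hν2]
  have hpair : ∑ ν ∈ ({μ - 1, μ} : Finset (Fin n)), (F ν - G ν)
      = (F (μ - 1) - G (μ - 1)) + (F μ - G μ) := Finset.sum_pair hμm
  have hsub : (μ - 1) + 1 = μ := sub_add_cancel μ 1
  have hFμm : F (μ - 1) = (r (μ - 1)) ⨯₃ x := by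
    show (Function.update r μ x (μ - 1)) ⨯₃ (Function.update r μ x (μ - 1 + 1)) = _
    rw [hsub, Function.update_self, Function.update_of_ne hμm]
  have hFμ : F μ = x ⨯₃ (r (μ + 1)) := by
    show (Function.update r μ x μ) ⨯₃ (Function.update r μ x (μ + 1)) = _
    rw [Function.update_self, Function.update_of_ne hμ1]
  have hGμm : G (μ - 1) = (r (μ - 1)) ⨯₃ (r μ) := by
    show (r (μ - 1)) ⨯₃ (r (μ - 1 + 1)) = _
    rw [hsub]
  have hGμ : G μ = (r μ) ⨯₃ (r (μ + 1)) := rfl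
  rw [polyAreaVec, polyAreaVec]
  show (1/2 : ℝ) • ∑ ν : Fin n, F ν = (1/2 : ℝ) • ∑ ν : Fin n, G ν + _
  rw [hsplit, hvanish, hpair, hFμm, hFμ, hGμm, hGμ, smul_add]
  congr 1
  congr 1
  funext i
  fin_cases i <;>
    simp [cross_apply, Pi.sub_apply] <;> ring

/-- The key summed outer-product identity. -/
lemma sum_outer_identity {n : ℕ} [NeZero n] (r : Fin n → Fin 3 → ℝ) (S : Fin 3 → ℝ) :
    ∑ μ : Fin n, vecMulVec (r μ) ((r (μ + 1) - r (μ - 1)) ⨯₃ S)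
      = ((∑ μ : Fin n, (r μ) ⨯₃ (r (μ + 1))) ⬝ᵥ S) • (1 : Matrix (Fin 3) (Fin 3) ℝ)
        - vecMulVec S (∑ μ : Fin n, (r μ) ⨯₃ (r (μ + 1))) := by
  have h1 : ∀ μ : Fin n, vecMulVec (r μ) ((r (μ + 1) - r (μ - 1)) ⨯₃ S)
      = vecMulVec (r μ) ((r (μ + 1)) ⨯₃ S) - vecMulVec (r μ) ((r (μ - 1)) ⨯₃ S) := by
    intro μ; rw [cross_sub_left, vecMulVec_sub_right]
  have h2 : ∑ μ : Fin n, vecMulVec (r μ) ((r (μ - 1)) ⨯₃ S)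
      = ∑ μ : Fin n, vecMulVec (r (μ + 1)) ((r μ) ⨯₃ S) := by
    refine Fintype.sum_equiv (Equiv.subRight (1 : Fin n)) _ _ fun ν => ?_
    simp [Equiv.subRight_apply, sub_add_cancel]
  calc ∑ μ : Fin n, vecMulVec (r μ) ((r (μ + 1) - r (μ - 1)) ⨯₃ S)
      = ∑ μ : Fin n, (vecMulVec (r μ) ((r (μ + 1)) ⨯₃ S)
          - vecMulVec (r (μ + 1)) ((r μ) ⨯₃ S)) := by
        rw [Finset.sum_congr rfl fun μ _ => h1 μ, Finset.sum_sub_distrib, h2,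
          ← Finset.sum_sub_distrib]
    _ = ∑ μ : Fin n, ((((r μ) ⨯₃ (r (μ + 1))) ⬝ᵥ S) • (1 : Matrix (Fin 3) (Fin 3) ℝ)
          - vecMulVec S ((r μ) ⨯₃ (r (μ + 1)))) :=
        Finset.sum_congr rfl fun μ _ => cross_outer _ _ _
    _ = _ := by
        rw [Finset.sum_sub_distrib, ← Finset.sum_smul, ← vecMulVec_sum_right,
          ← sum_dotProduct']

/-- If the polygon area vector `S` is nonzero, then
`∑ μ, r μ ⊗ ∇_{r μ}‖S‖ = ‖S‖ I - (1/‖S‖) S ⊗ S`. -/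
theorem stmt4 (n : ℕ) [NeZero n] (hn : 3 ≤ n) (r : Fin n → Fin 3 → ℝ)
    (hS : polyAreaVec r ≠ 0) :
    ∑ μ : Fin n, vecMulVec (r μ) (vgrad (fun s => norm3 (polyAreaVec s)) r μ)
      = norm3 (polyAreaVec r) • (1 : Matrix (Fin 3) (Fin 3) ℝ)
        - (norm3 (polyAreaVec r))⁻¹ • vecMulVec (polyAreaVec r) (polyAreaVec r) := by
  set S : Fin 3 → ℝ := polyAreaVec r with hSdef
  set N : ℝ := norm3 S with hNdef
  have hN : N ≠ 0 := norm3_ne_zero hS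
  -- Step 1: compute the gradient at each vertex
  have hvg : ∀ μ : Fin n, vgrad (fun s => norm3 (polyAreaVec s)) r μ
      = ((2 * N)⁻¹) • (((r (μ + 1) - r (μ - 1)) ⨯₃ S)) := by
    intro μ
    set d : Fin 3 → ℝ := r (μ + 1) - r (μ - 1) with hd
    -- the continuous linear derivative
    set Llin : (Fin 3 → ℝ) →ₗ[ℝ] (Fin 3 → ℝ) :=
      (1/2 : ℝ) • ((crossProduct (R := ℝ)).flip d) with hLlin
    set L : (Fin 3 → ℝ) →L[ℝ] (Fin 3 → ℝ) := LinearMap.toContinuousLinearMap Llin with hL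
    have hLapp : ∀ v, L v = (1/2 : ℝ) • (v ⨯₃ d) := by
      intro v
      rw [hL]
      simp [hLlin]
    have hfun : (fun x => polyAreaVec (Function.update r μ x))
        = fun x => (S - L (r μ)) + L x := by
      funext x
      rw [polyAreaVec_update hn r μ x, hLapp, hLapp, ← hSdef, ← hd, cross_sub_left,
        smul_sub]
      abel
    have hgderiv : HasFDerivAt (fun x => polyAreaVec (Function.update r μ x)) L (r μ) := by
      rw [hfun]
      exact (L.hasFDerivAt).const_add _
    have hgval : polyAreaVec (Function.update r μ (r μ)) = S := by
      rw [Function.update_eq_self]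
    funext j
    show fderiv ℝ (fun x => norm3 (polyAreaVec (Function.update r μ x))) (r μ)
        (Pi.single j 1) = _
    rw [fderiv_norm3_comp hgderiv (by rw [hgval]; exact hS) (Pi.single j 1), hgval,
      hLapp, ← hNdef]
    rw [dotProduct_smul, dot_single_cross]
    simp only [Pi.smul_apply, smul_eq_mul, mul_inv]
    ring
  -- Step 2: sum the outer products
  calc ∑ μ : Fin n, vecMulVec (r μ) (vgrad (fun s => norm3 (polyAreaVec s)) r μ)
      = (2 * N)⁻¹ • ∑ μ : Fin n, vecMulVec (r μ) ((r (μ + 1) - r (μ - 1)) ⨯₃ S) := by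
        rw [Finset.smul_sum]
        exact Finset.sum_congr rfl fun μ _ => by rw [hvg μ, vecMulVec_smul_right]
    _ = (2 * N)⁻¹ • (((∑ μ : Fin n, (r μ) ⨯₃ (r (μ + 1))) ⬝ᵥ S) • (1 : Matrix (Fin 3) (Fin 3) ℝ)
          - vecMulVec S (∑ μ : Fin n, (r μ) ⨯₃ (r (μ + 1)))) := by
        rw [sum_outer_identity]
    _ = N • (1 : Matrix (Fin 3) (Fin 3) ℝ) - N⁻¹ • vecMulVec S S := by
        have hsum : ∑ μ : Fin n, (r μ) ⨯₃ (r (μ + 1)) = (2 : ℝ) • S := by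
          rw [hSdef, polyAreaVec, smul_smul]
          norm_num
        rw [hsum, smul_dotProduct, vecMulVec_smul_right, smul_sub, smul_smul, smul_smul,
          smul_eq_mul]
        congr 1
        · have : (2 * N)⁻¹ * (2 * (S ⬝ᵥ S)) = N := by
            rw [← sq_norm3 S, ← hNdef]
            field_simp
          rw [this]
        · congr 1
          rw [mul_inv]
          field_simp
end
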